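/- Let d ≥ 1 and Λ′ ⊆ ℝ^d with Λ′ = −Λ′. Let u = (u₁, …, u_d) be a finitely supported vector field on Λ′ with values in ℂ^d such that each component satisfies the reality condition and u is divergence-free, i.e. Σ_{j=1}^d k_j u_j(k) = 0 for every k ∈ Λ′, and let p : Λ′ → ℂ be finitely supported satisfying the reality condition. Then the energy balance identity holds: Σ_{k ∈ Λ′} Σ_{i=1}^d [ (Σ_{j=1}^d u_j ∗ ∂_j u_i)(k) + i·k_i·p(k) ] · conj(u_i(k)) = 0. In particular, for solutions of the incompressible Euler equations on the lattice the energy E = ½(u, u) is conserved in time. -/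

import Mathlib

open scoped Classical

/-- The convolution product on a lattice `Λ ⊆ ℝ^d`:
`(f ∗ g)(k) = Σ_{p,q ∈ Λ, p+q=k} f(p) g(q)`. -/
noncomputable def latticeConv {d : ℕ} (Λ : Set (Fin d → ℝ))
    (f g : (Fin d → ℝ) → ℂ) (k : Fin d → ℝ) : ℂ :=
  ∑ᶠ p ∈ Λ, ∑ᶠ q ∈ Λ, if p + q = k then f p * g q else 0

/-- The reality condition `f(−k) = conj(f(k))`. -/
def RealityCond {d : ℕ} (f : (Fin d → ℝ) → ℂ) : Prop := ∀ k, f (-k) = star (f k)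

/-- The `j`-th lattice derivative `∂_j f(k) = i k_j f(k)`. -/
noncomputable def latticeDeriv {d : ℕ} (j : Fin d) (f : (Fin d → ℝ) → ℂ) :
    (Fin d → ℝ) → ℂ := fun k => Complex.I * (k j : ℂ) * f k

/-!
Since `u` is supported in `Λ`, the restrictions `p, q ∈ Λ` in the convolution are automatic and
`(u_j ∗ ∂_j u_i)(k) = Σ_p u_j(p) ∂_j u_i(k - p)`. The pressure term vanishes pointwise, because
`Σ_i k_i conj(u_i(k)) = conj(k · u(k)) = 0`. After the reality condition turns `conj(u_i(k))` into
`u_i(-k)`, the transport term is, for each fixed `p`, a sum over `k` that is odd under the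
involution `k ↦ p - k`: it exchanges the other two wave vectors `k - p` and `-k` of the triad, and
the terms at `k` and `p - k` add up to `-i (p · u(p)) (u(k - p) · u(-k)) = 0`.
-/

theorem finsum_eq_zero_of_comp_equiv_eq_neg {α M : Type*} [AddCommGroup M] [IsAddTorsionFree M]
    (e : α ≃ α) (f : α → M) (h : ∀ x, f (e x) = -f x) : ∑ᶠ x, f x = 0 := by
  refine self_eq_neg.mp ?_
  calc ∑ᶠ x, f x = ∑ᶠ x, f (e x) := (finsum_comp_equiv e).symm
    _ = -∑ᶠ x, f x := by simp only [h, finsum_neg_distrib]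

theorem finsum_mem_eq_finsum_of_support_subset {α M : Type*} [AddCommMonoid M] {f : α → M}
    {s : Set α} (h : Function.support f ⊆ s) : ∑ᶠ x ∈ s, f x = ∑ᶠ x, f x := by
  rw [← finsum_mem_univ f]
  exact finsum_mem_inter_support_eq f s Set.univ (by simp [Set.inter_eq_right.mpr h])

theorem exists_finset_forall_support_subset {ι α M : Type*} [Finite ι] [Zero M]
    {f : ι → α → M} (hfin : ∀ i, (Function.support (f i)).Finite) :
    ∃ S : Finset α, ∀ i, Function.support (f i) ⊆ S := by
  refine ⟨(Set.finite_iUnion hfin).toFinset, fun i => ?_⟩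
  rw [Set.Finite.coe_toFinset]
  exact Set.subset_iUnion (fun i => Function.support (f i)) i

theorem support_sum_sum_mul_star_subset {ι κ α : Type*} [Fintype ι] [Fintype κ]
    {u : ι → α → ℂ} {s : Set α} (hs : ∀ i, Function.support (u i) ⊆ s) (c : ι → κ → α → ℂ) :
    Function.support (fun k => ∑ i, ∑ j, c i j k * star (u i k)) ⊆ s := by
  intro k hk
  by_contra hks
  exact hk (by simp [Function.notMem_support.mp fun h => hks (hs _ h)])

section Lattice

variable {d : ℕ}

theorem latticeConv_eq_finsum {Λ : Set (Fin d → ℝ)} {f g : (Fin d → ℝ) → ℂ}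
    (hf : Function.support f ⊆ Λ) (hg : Function.support g ⊆ Λ) (k : Fin d → ℝ) :
    latticeConv Λ f g k = ∑ᶠ p, f p * g (k - p) := by
  have inner (p : Fin d → ℝ) :
      ∑ᶠ q ∈ Λ, (if p + q = k then f p * g q else 0 : ℂ) = f p * g (k - p) := by
    calc _ = ∑ᶠ q, (if p + q = k then f p * g q else 0 : ℂ) :=
          finsum_mem_eq_finsum_of_support_subset fun q hq => hg <| by
            by_cases hpq : p + q = k <;> simp_all
      _ = f p * g (k - p) := by
        rw [finsum_eq_single _ (k - p) fun q hq => if_neg ?_, if_pos (add_sub_cancel p k)]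
        rintro rfl
        exact hq (add_sub_cancel_left p q).symm
  unfold latticeConv
  simp only [inner]
  refine finsum_mem_eq_finsum_of_support_subset fun p hp => hf ?_
  exact Function.support_mul_subset_left _ _ hp

theorem latticeConv_eq_sum {Λ : Set (Fin d → ℝ)} {f g : (Fin d → ℝ) → ℂ}
    (hf : Function.support f ⊆ Λ) (hg : Function.support g ⊆ Λ) {S : Finset (Fin d → ℝ)}
    (hS : Function.support f ⊆ S) (k : Fin d → ℝ) :
    latticeConv Λ f g k = ∑ p ∈ S, f p * g (k - p) := by
  rw [latticeConv_eq_finsum hf hg]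
  exact finsum_eq_sum_of_support_subset _ fun p hp => hS (Function.support_mul_subset_left _ _ hp)

theorem support_latticeDeriv_subset (j : Fin d) (f : (Fin d → ℝ) → ℂ) :
    Function.support (latticeDeriv j f) ⊆ Function.support f :=
  Function.support_mul_subset_right _ _

def DivergenceFree (u : Fin d → (Fin d → ℝ) → ℂ) : Prop :=
  ∀ k, ∑ j, (k j : ℂ) * u j k = 0

theorem divergenceFree_of_support_subset {Λ : Set (Fin d → ℝ)} {u : Fin d → (Fin d → ℝ) → ℂ}
    (hsupp : ∀ i, Function.support (u i) ⊆ Λ) (hdiv : ∀ k ∈ Λ, ∑ j, (k j : ℂ) * u j k = 0) :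
    DivergenceFree u := by
  intro k
  by_cases hk : k ∈ Λ
  · exact hdiv k hk
  · exact Finset.sum_eq_zero fun j _ => by
      rw [Function.notMem_support.mp fun h => hk (hsupp j h), mul_zero]

theorem sum_pressure_mul_star_eq_zero {u : Fin d → (Fin d → ℝ) → ℂ} (hdiv : DivergenceFree u)
    (k : Fin d → ℝ) (c : ℂ) :
    ∑ i, Complex.I * (k i : ℂ) * c * star (u i k) = 0 := by
  calc ∑ i, Complex.I * (k i : ℂ) * c * star (u i k)
      = Complex.I * c * star (∑ i, (k i : ℂ) * u i k) := by
        simp only [star_sum, star_mul', Complex.star_def, Complex.conj_ofReal, Finset.mul_sum]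
        exact Finset.sum_congr rfl fun i _ => by ring
    _ = 0 := by rw [hdiv k, star_zero, mul_zero]

theorem finsum_transport_eq_zero {u : Fin d → (Fin d → ℝ) → ℂ} (hreal : ∀ i, RealityCond (u i))
    (hdiv : DivergenceFree u) (p : Fin d → ℝ) :
    ∑ᶠ k, ∑ i, ∑ j, u j p * latticeDeriv j (u i) (k - p) * star (u i k) = 0 := by
  refine finsum_eq_zero_of_comp_equiv_eq_neg (Equiv.subLeft p) _ fun k => ?_
  simp only [Equiv.subLeft_apply, latticeDeriv, ← hreal _ _, sub_sub_cancel_left, neg_sub]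
  rw [eq_neg_iff_add_eq_zero, ← Finset.sum_add_distrib]
  calc _ = ∑ i, -Complex.I * (∑ j, (p j : ℂ) * u j p) * (u i (k - p) * u i (-k)) := by
        refine Finset.sum_congr rfl fun i _ => ?_
        rw [← Finset.sum_add_distrib, Finset.mul_sum, Finset.sum_mul]
        refine Finset.sum_congr rfl fun j _ => ?_
        simp only [Pi.neg_apply, Pi.sub_apply]
        push_cast
        ring
    _ = 0 := by simp only [hdiv p, mul_zero, zero_mul, Finset.sum_const_zero]

end Lattice

theorem euler_energy_balance_general (d : ℕ)
    (Λ : Set (Fin d → ℝ))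
    (u : Fin d → (Fin d → ℝ) → ℂ) (p : (Fin d → ℝ) → ℂ)
    (hufin : ∀ i, (Function.support (u i)).Finite)
    (husupp : ∀ i, Function.support (u i) ⊆ Λ)
    (hureal : ∀ i, RealityCond (u i))
    (hdiv : ∀ k ∈ Λ, ∑ j, (k j : ℂ) * u j k = 0) :
    ∑ᶠ k ∈ Λ, ∑ i,
      ((∑ j, latticeConv Λ (u j) (latticeDeriv j (u i)) k) +
        Complex.I * (k i : ℂ) * p k) * star (u i k) = 0 := by
  obtain ⟨S, hS⟩ := exists_finset_forall_support_subset hufin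
  have hfree := divergenceFree_of_support_subset husupp hdiv
  have hderiv (i j : Fin d) : Function.support (latticeDeriv j (u i)) ⊆ Λ :=
    (support_latticeDeriv_subset j (u i)).trans (husupp i)
  calc _ = ∑ᶠ k ∈ Λ, ∑ i, ∑ j, latticeConv Λ (u j) (latticeDeriv j (u i)) k * star (u i k) := by
        simp only [add_mul, Finset.sum_add_distrib, sum_pressure_mul_star_eq_zero hfree,
          add_zero, Finset.sum_mul]
    _ = ∑ k ∈ S, ∑ i, ∑ j, ∑ q ∈ S, u j q * latticeDeriv j (u i) (k - q) * star (u i k) := by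
        rw [finsum_mem_eq_finsum_of_support_subset (support_sum_sum_mul_star_subset husupp _),
          finsum_eq_sum_of_support_subset _ (support_sum_sum_mul_star_subset hS _)]
        simp only [latticeConv_eq_sum (husupp _) (hderiv _ _) (hS _), Finset.sum_mul]
    _ = ∑ q ∈ S, ∑ k ∈ S, ∑ i, ∑ j, u j q * latticeDeriv j (u i) (k - q) * star (u i k) := by
        rw [Finset.sum_comm (s := S) (t := S)]
        exact Finset.sum_congr rfl fun k _ =>
          (Finset.sum_congr rfl fun i _ => Finset.sum_comm).trans Finset.sum_comm
    _ = ∑ q ∈ S, ∑ᶠ k, ∑ i, ∑ j, u j q * latticeDeriv j (u i) (k - q) * star (u i k) :=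
        Finset.sum_congr rfl fun q _ =>
          (finsum_eq_sum_of_support_subset _ (support_sum_sum_mul_star_subset hS _)).symm
    _ = 0 := Finset.sum_eq_zero fun q _ => finsum_transport_eq_zero hureal hfree q

/-- Energy balance identity on a generalized lattice `Λ′ = −Λ′ ⊆ ℝ^d`: for a
finitely supported, divergence-free vector field `u` and a pressure `p`, both
satisfying the reality condition,
`Σ_k Σ_i [ (Σ_j u_j ∗ ∂_j u_i)(k) + i k_i p(k) ] conj(u_i(k)) = 0`.
In particular, the energy `E = ½(u,u)` is conserved for solutions of the
incompressible Euler equations on the lattice. -/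
theorem euler_energy_balance (d : ℕ) (hd : 1 ≤ d)
    (Λ : Set (Fin d → ℝ)) (hΛ : Λ = -Λ)
    (u : Fin d → (Fin d → ℝ) → ℂ) (p : (Fin d → ℝ) → ℂ)
    (hufin : ∀ i, (Function.support (u i)).Finite)
    (husupp : ∀ i, Function.support (u i) ⊆ Λ)
    (hureal : ∀ i, RealityCond (u i))
    (hdiv : ∀ k ∈ Λ, ∑ j, (k j : ℂ) * u j k = 0)
    (hpfin : (Function.support p).Finite)
    (hpsupp : Function.support p ⊆ Λ)
    (hpreal : RealityCond p) :
    ∑ᶠ k ∈ Λ, ∑ i,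
      ((∑ j, latticeConv Λ (u j) (latticeDeriv j (u i)) k) +
        Complex.I * (k i : ℂ) * p k) * star (u i k) = 0 :=
  euler_energy_balance_general d Λ u p hufin husupp hureal hdiv
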